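/- arXiv:2304.00607 — 2 statements merged into one kernel-verified Lean document; each statement's English description precedes it below -/
import Mathlib

section
/- Fix (ε,d) ∈ {(1,1),(−1,0),(1,0)} and let r ≥ 2. For (a₁,a₂) ∈ Ω₃ set φ₂ = e_r + e_{r−1} − f_{r−1} + f_r and φ₃ = a₁·e_r + φ₋(a₁,a₂)·e_{r−1} + ε·φ₊(a₁,a₂)·f_{r−1} + ε·a₂·f_r. Then: φ₂ and φ₃ are isotropic; ω(e_r,f_r) = 1, ω(e_r,φ₂) = 1, ω(e_r,φ₃) = ε·a₂, ω(f_r,φ₂) = ε, ω(f_r,φ₃) = ε·a₁, ω(φ₂,φ₃) = ε; the 4-tuple Φ₃(a₁,a₂) = ([e_r],[f_r],[φ₂],[φ₃]) lies in P_r^{{4}}; and CR₁(Φ₃(a₁,a₂)) = a₁ and CR₂(Φ₃(a₁,a₂)) = a₂. -/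
/-!
All four vectors lie in the span of `e_r, e_{r-1}, f_{r-1}, f_r`, where ω reads
`x₁y₄ + x₂y₃ + ε(x₃y₂ + x₄y₁)`. Using `φ₊ - φ₋ = Γ`, `φ₋φ₊ = -(1+ε)a₁a₂/2` and `ε² = 1`, the
Gram matrix of `(e_r, f_r, φ₂, φ₃)` has zero diagonal and entries built from `1, ε, a₁, a₂`
off it, and its determinant is `Δ(a₁,a₂)`. For `(a₁,a₂) ∈ Ω₃` an invertible Gram matrix gives
linear independence and nondegeneracy on the span at once; the ω-values and cross-ratios are
read off its entries.
-/

noncomputable section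

open scoped Classical

namespace DCM

/-- `Vc r d` is `ℂ^(2r+d)`, with coordinates taken in the ordered basis
`e_r, …, e_1, (h), f_1, …, f_r` (the middle vector `h` being present only if `d = 1`). -/
abbrev Vc (r d : ℕ) := Fin (2 * r + d) → ℂ

/-- `e_i` for `1 ≤ i ≤ r`: the standard basis vector at position `r - i`. -/
def eV (r d i : ℕ) : Vc r d := fun k => if (k : ℕ) = r - i then 1 else 0

/-- `h`: the standard basis vector at position `r` (relevant only when `d = 1`). -/
def hV (r d : ℕ) : Vc r d := fun k => if (k : ℕ) = r then 1 else 0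

/-- `f_i` for `1 ≤ i ≤ r`: the standard basis vector at position `r + d + i - 1`. -/
def fV (r d i : ℕ) : Vc r d := fun k => if (k : ℕ) = r + d + i - 1 then 1 else 0

/-- The ε-symmetric bilinear form ω on `Vc r d`, determined by `ω(e_i,f_j) = δ_ij`,
`ω(f_i,e_j) = ε·δ_ij`, `ω(e_i,e_j) = ω(f_i,f_j) = 0`, and (when `d = 1`)
`ω(h,h) = 1` and `h` orthogonal to all `e_i`, `f_i`. -/
def om (ε : ℂ) (r d : ℕ) (v w : Vc r d) : ℂ :=
  (∑ j : Fin r,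
    (v ⟨r - 1 - (j : ℕ), by have := j.isLt; omega⟩ *
        w ⟨r + d + (j : ℕ), by have := j.isLt; omega⟩ +
      ε * v ⟨r + d + (j : ℕ), by have := j.isLt; omega⟩ *
        w ⟨r - 1 - (j : ℕ), by have := j.isLt; omega⟩)) +
  (if hd : d = 1 then v ⟨r, by omega⟩ * w ⟨r, by omega⟩ else 0)

/-- `v` is a nonzero isotropic vector, i.e. it represents a line `[v] ∈ P_r`. -/
def IsoV (ε : ℂ) (r d : ℕ) (v : Vc r d) : Prop := v ≠ 0 ∧ om ε r d v v = 0

/-- `g` lies in `G_r`, the group of linear automorphisms preserving ω. -/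
def InG (ε : ℂ) (r d : ℕ) (g : Vc r d ≃ₗ[ℂ] Vc r d) : Prop :=
  ∀ v w, om ε r d (g v) (g w) = om ε r d v w

/-- The ω-cross-ratio `CR₀`. -/
def CR0 (ε : ℂ) (r d : ℕ) (v0 v1 v2 v3 : Vc r d) : ℂ :=
  (om ε r d v0 v2 * om ε r d v1 v3) / (om ε r d v0 v3 * om ε r d v1 v2)

/-- The ω-cross-ratio `CR₁`. -/
def CR1 (ε : ℂ) (r d : ℕ) (v0 v1 v2 v3 : Vc r d) : ℂ := (CR0 ε r d v1 v2 v0 v3)⁻¹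

/-- The ω-cross-ratio `CR₂`. -/
def CR2 (ε : ℂ) (r d : ℕ) (v0 v1 v2 v3 : Vc r d) : ℂ := CR0 ε r d v2 v0 v1 v3

/-- `(v0,v1,v2,v3)` represents a tuple of lines in `P_r^{(4)}`:
all lines isotropic and pairwise non-orthogonal. -/
def Conf4 (ε : ℂ) (r d : ℕ) (v0 v1 v2 v3 : Vc r d) : Prop :=
  IsoV ε r d v0 ∧ IsoV ε r d v1 ∧ IsoV ε r d v2 ∧ IsoV ε r d v3 ∧
  om ε r d v0 v1 ≠ 0 ∧ om ε r d v0 v2 ≠ 0 ∧ om ε r d v0 v3 ≠ 0 ∧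
  om ε r d v1 v2 ≠ 0 ∧ om ε r d v1 v3 ≠ 0 ∧ om ε r d v2 v3 ≠ 0

/-- `(v0,…,v4)` represents a tuple of lines in `P_r^{(5)}`. -/
def Conf5 (ε : ℂ) (r d : ℕ) (v0 v1 v2 v3 v4 : Vc r d) : Prop :=
  Conf4 ε r d v0 v1 v2 v3 ∧ IsoV ε r d v4 ∧
  om ε r d v0 v4 ≠ 0 ∧ om ε r d v1 v4 ≠ 0 ∧ om ε r d v2 v4 ≠ 0 ∧ om ε r d v3 v4 ≠ 0

/-- ω restricted to the span of `s` is nondegenerate. -/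
def NondegOn (ε : ℂ) (r d : ℕ) (s : Set (Vc r d)) : Prop :=
  ∀ x ∈ Submodule.span ℂ s, (∀ y ∈ Submodule.span ℂ s, om ε r d x y = 0) → x = 0

/-- `(v0,v1,v2,v3)` represents a tuple of lines in `P_r^{{4}}`: pairwise non-orthogonal
isotropic lines, linearly independent, spanning a nondegenerate subspace. -/
def Gen4 (ε : ℂ) (r d : ℕ) (v0 v1 v2 v3 : Vc r d) : Prop :=
  Conf4 ε r d v0 v1 v2 v3 ∧ LinearIndependent ℂ ![v0, v1, v2, v3] ∧
  NondegOn ε r d {v0, v1, v2, v3}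

/-- `(v0,…,v4)` represents a tuple of lines in `P_r^{{5}}`: every 4-element subtuple
(in the induced order) lies in `P_r^{{4}}`. -/
def Gen5 (ε : ℂ) (r d : ℕ) (v0 v1 v2 v3 v4 : Vc r d) : Prop :=
  Conf5 ε r d v0 v1 v2 v3 v4 ∧
  Gen4 ε r d v0 v1 v2 v3 ∧ Gen4 ε r d v0 v1 v2 v4 ∧ Gen4 ε r d v0 v1 v3 v4 ∧
  Gen4 ε r d v0 v2 v3 v4 ∧ Gen4 ε r d v1 v2 v3 v4

/-- `Γ(z₁,z₂) = 1 - z₁ - z₂`. -/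
def Gam (z1 z2 : ℂ) : ℂ := 1 - z1 - z2

/-- `Δ(z₁,z₂) = Γ(z₁,z₂)² - 2(1+ε)·z₁z₂`. -/
def Del (ε z1 z2 : ℂ) : ℂ := Gam z1 z2 ^ 2 - 2 * (1 + ε) * z1 * z2

/-- `Δ^{1/2}`, relative to a fixed choice `sq` of complex square root:
`Γ` if `ε = -1`, and `sq ∘ Δ` otherwise. -/
def DelHalf (ε : ℂ) (sq : ℂ → ℂ) (z1 z2 : ℂ) : ℂ :=
  if ε = -1 then Gam z1 z2 else sq (Del ε z1 z2)

/-- `φ₊ = (Δ^{1/2} + Γ)/2`. -/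
def phiP (ε : ℂ) (sq : ℂ → ℂ) (z1 z2 : ℂ) : ℂ := (DelHalf ε sq z1 z2 + Gam z1 z2) / 2

/-- `φ₋ = (Δ^{1/2} - Γ)/2`. -/
def phiM (ε : ℂ) (sq : ℂ → ℂ) (z1 z2 : ℂ) : ℂ := (DelHalf ε sq z1 z2 - Gam z1 z2) / 2

section Gram

variable {R M ι : Type*} [CommRing R] [NoZeroDivisors R] [AddCommGroup M] [Module R M]
  [Fintype ι] [DecidableEq ι]

def gramMatrix (B : LinearMap.BilinForm R M) (v : ι → M) : Matrix ι ι R :=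
  Matrix.of fun i j => B (v i) (v j)

variable {B : LinearMap.BilinForm R M} {v : ι → M}

lemma eq_zero_of_det_gramMatrix_ne_zero (hB : (gramMatrix B v).det ≠ 0) {c : ι → R}
    (hc : ∀ j, B (∑ i, c i • v i) (v j) = 0) : c = 0 :=
  Matrix.eq_zero_of_vecMul_eq_zero hB <| funext fun j => by
    simpa [Matrix.vecMul, dotProduct, gramMatrix, mul_comm] using hc j

lemma linearIndependent_of_det_gramMatrix_ne_zero (hB : (gramMatrix B v).det ≠ 0) :
    LinearIndependent R v :=
  Fintype.linearIndependent_iff.2 fun c hc =>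
    congrFun (eq_zero_of_det_gramMatrix_ne_zero hB fun j => by simp [hc])

lemma eq_zero_of_mem_span_of_det_gramMatrix_ne_zero (hB : (gramMatrix B v).det ≠ 0) {x : M}
    (hx : x ∈ Submodule.span R (Set.range v)) (hxv : ∀ j, B x (v j) = 0) : x = 0 := by
  obtain ⟨c, rfl⟩ := (Submodule.mem_span_range_iff_exists_fun R).1 hx
  simp [eq_zero_of_det_gramMatrix_ne_zero hB hxv]

end Gram

def omForm (ε : ℂ) (r d : ℕ) : LinearMap.BilinForm ℂ (Vc r d) :=
  LinearMap.mk₂ ℂ (om ε r d)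
    (fun v v' w => by
      simp only [om, Pi.add_apply, add_mul, mul_add, Finset.sum_add_distrib]
      split_ifs <;> ring)
    (fun c v w => by
      simp only [om, Pi.smul_apply, smul_eq_mul, mul_add, Finset.mul_sum]
      congr 1
      · exact Finset.sum_congr rfl fun _ _ => by ring
      · split_ifs <;> ring)
    (fun v w w' => by
      simp only [om, Pi.add_apply, mul_add, Finset.sum_add_distrib]
      split_ifs <;> ring)
    (fun c v w => by
      simp only [om, Pi.smul_apply, smul_eq_mul, mul_add, Finset.mul_sum]
      congr 1
      · exact Finset.sum_congr rfl fun _ _ => by ring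
      · split_ifs <;> ring)

@[simp] lemma omForm_apply (ε : ℂ) (r d : ℕ) (v w : Vc r d) : omForm ε r d v w = om ε r d v w := rfl

section basis
variable (ε : ℂ) {r d i j : ℕ}

lemma om_eV_eV (hi : 1 ≤ i) (hir : i ≤ r) (hj : 1 ≤ j) : om ε r d (eV r d i) (eV r d j) = 0 := by
  simp only [om, eV]
  rw [Finset.sum_eq_zero fun k _ => by split_ifs <;> first | omega | simp]
  split_ifs <;> first | omega | simp

lemma om_fV_fV (hi : 1 ≤ i) (hj : 1 ≤ j) : om ε r d (fV r d i) (fV r d j) = 0 := by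
  simp only [om, fV]
  rw [Finset.sum_eq_zero fun k _ => by split_ifs <;> first | omega | simp]
  split_ifs <;> first | omega | simp

lemma om_eV_fV (hi : 1 ≤ i) (hir : i ≤ r) (hj : 1 ≤ j) :
    om ε r d (eV r d i) (fV r d j) = if i = j then 1 else 0 := by
  simp only [om, eV, fV]
  rw [Finset.sum_eq_single (⟨i - 1, by omega⟩ : Fin r) fun k _ hk => by
    simp only [ne_eq, Fin.ext_iff] at hk; split_ifs <;> first | omega | simp]
  · simp only
    split_ifs <;> first | omega | simp
  · simp

lemma om_fV_eV (hi : 1 ≤ i) (hj : 1 ≤ j) (hjr : j ≤ r) :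
    om ε r d (fV r d i) (eV r d j) = if i = j then ε else 0 := by
  simp only [om, eV, fV]
  rw [Finset.sum_eq_single (⟨j - 1, by omega⟩ : Fin r) fun k _ hk => by
    simp only [ne_eq, Fin.ext_iff] at hk; split_ifs <;> first | omega | simp]
  · simp only
    split_ifs <;> first | omega | simp
  · simp

end basis

lemma gen4_of_gramMatrix {ε : ℂ} {r d : ℕ} {v0 v1 v2 v3 : Vc r d}
    (hiso : ∀ i, gramMatrix (omForm ε r d) ![v0, v1, v2, v3] i i = 0)
    (horth : ∀ i j, i < j → gramMatrix (omForm ε r d) ![v0, v1, v2, v3] i j ≠ 0)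
    (hdet : (gramMatrix (omForm ε r d) ![v0, v1, v2, v3]).det ≠ 0) :
    Gen4 ε r d v0 v1 v2 v3 := by
  have hli := linearIndependent_of_det_gramMatrix_ne_zero hdet
  have hv (i : Fin 4) : IsoV ε r d (![v0, v1, v2, v3] i) := ⟨hli.ne_zero i, hiso i⟩
  refine ⟨⟨hv 0, hv 1, hv 2, hv 3, horth 0 1 (by decide), horth 0 2 (by decide),
    horth 0 3 (by decide), horth 1 2 (by decide), horth 1 3 (by decide),
    horth 2 3 (by decide)⟩, hli, fun x hx hxv => ?_⟩
  have hrange : Set.range ![v0, v1, v2, v3] = {v0, v1, v2, v3} := by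
    simp only [Matrix.range_cons, Matrix.range_empty, Set.union_empty, Set.singleton_union]
  refine eq_zero_of_mem_span_of_det_gramMatrix_ne_zero hdet (hrange ▸ hx) fun j => ?_
  exact hxv _ (Submodule.subset_span (by fin_cases j <;> simp))

def hyp4 (r d : ℕ) (x₁ x₂ x₃ x₄ : ℂ) : Vc r d :=
  x₁ • eV r d r + x₂ • eV r d (r - 1) + x₃ • fV r d (r - 1) + x₄ • fV r d r

lemma om_hyp4 (ε : ℂ) {r d : ℕ} (hr : 2 ≤ r) (x₁ x₂ x₃ x₄ y₁ y₂ y₃ y₄ : ℂ) :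
    om ε r d (hyp4 r d x₁ x₂ x₃ x₄) (hyp4 r d y₁ y₂ y₃ y₄) =
      x₁ * y₄ + x₂ * y₃ + ε * (x₃ * y₂ + x₄ * y₁) := by
  have h1 : 1 ≤ r := by omega
  have h2 : 1 ≤ r - 1 := by omega
  have h3 : r - 1 ≤ r := by omega
  have h4 : r - 1 ≠ r := by omega
  simp only [hyp4, ← omForm_apply, map_add, map_smul, LinearMap.add_apply, LinearMap.smul_apply]
  simp only [omForm_apply, om_eV_eV, om_fV_fV, om_eV_fV, om_fV_eV, h1, h2, h3, le_refl, h4,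
    h4.symm, smul_eq_mul, if_true, if_false]
  ring

lemma eV_eq_hyp4 (r d : ℕ) : eV r d r = hyp4 r d 1 0 0 0 := by simp [hyp4]

lemma fV_eq_hyp4 (r d : ℕ) : fV r d r = hyp4 r d 0 0 0 1 := by simp [hyp4]

lemma phi2_eq_hyp4 (r d : ℕ) :
    eV r d r + eV r d (r - 1) - fV r d (r - 1) + fV r d r = hyp4 r d 1 1 (-1) 1 := by
  simp [hyp4, sub_eq_add_neg]

lemma delHalf_sq {ε : ℂ} {sq : ℂ → ℂ} (hsq : ∀ z, sq z ^ 2 = z) (z1 z2 : ℂ) :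
    DelHalf ε sq z1 z2 ^ 2 = Del ε z1 z2 := by
  unfold DelHalf
  split_ifs with hε
  · simp [Del, hε]
  · exact hsq _

lemma phiP_sub_phiM (ε : ℂ) (sq : ℂ → ℂ) (z1 z2 : ℂ) :
    phiP ε sq z1 z2 - phiM ε sq z1 z2 = Gam z1 z2 := by
  simp only [phiP, phiM]; ring

lemma phiM_mul_phiP {ε : ℂ} {sq : ℂ → ℂ} (hsq : ∀ z, sq z ^ 2 = z) (z1 z2 : ℂ) :
    phiM ε sq z1 z2 * phiP ε sq z1 z2 = -((1 + ε) / 2) * (z1 * z2) := by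
  have h := delHalf_sq (ε := ε) hsq z1 z2
  simp only [phiM, phiP, Del] at h ⊢
  linear_combination h / 4

lemma gramMatrix_Φ₃ {ε : ℂ} (hε : ε ^ 2 = 1) {sq : ℂ → ℂ} (hsq : ∀ z, sq z ^ 2 = z)
    {r d : ℕ} (hr : 2 ≤ r) (a1 a2 : ℂ) :
    gramMatrix (omForm ε r d) ![eV r d r, fV r d r, hyp4 r d 1 1 (-1) 1,
        hyp4 r d a1 (phiM ε sq a1 a2) (ε * phiP ε sq a1 a2) (ε * a2)] =
      !![0, 1, 1, ε * a2; ε, 0, ε, ε * a1; ε, 1, 0, ε; a2, a1, 1, 0] := by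
  rw [eV_eq_hyp4, fV_eq_hyp4]
  set φ3 := hyp4 r d a1 (phiM ε sq a1 a2) (ε * phiP ε sq a1 a2) (ε * a2)
  have hΓ : phiP ε sq a1 a2 - phiM ε sq a1 a2 = 1 - a1 - a2 := phiP_sub_phiM ε sq a1 a2
  have h23 : om ε r d (hyp4 r d 1 1 (-1) 1) φ3 = ε := by
    rw [om_hyp4 ε hr]; linear_combination ε * hΓ
  have h30 : om ε r d φ3 (hyp4 r d 1 0 0 0) = a2 := by
    rw [om_hyp4 ε hr]; linear_combination a2 * hε
  have h32 : om ε r d φ3 (hyp4 r d 1 1 (-1) 1) = 1 := by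
    rw [om_hyp4 ε hr]; linear_combination (phiP ε sq a1 a2 + a2) * hε + hΓ
  have h33 : om ε r d φ3 φ3 = 0 := by
    rw [om_hyp4 ε hr]
    linear_combination (ε + ε ^ 2) * phiM_mul_phiP (ε := ε) hsq a1 a2 - ε * a1 * a2 / 2 * hε
  ext i j
  fin_cases i <;> fin_cases j <;> simp [gramMatrix, h23, h30, h32, h33, om_hyp4 ε hr, φ3]

lemma det_gramMatrix_Φ₃ {ε : ℂ} (hε : ε ^ 2 = 1) (a1 a2 : ℂ) :
    (!![0, 1, 1, ε * a2; ε, 0, ε, ε * a1; ε, 1, 0, ε; a2, a1, 1, 0] : Matrix (Fin 4) (Fin 4) ℂ).det =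
      Del ε a1 a2 := by
  simp [Matrix.det_succ_row_zero, Fin.sum_univ_succ, Fin.succAbove, Del, Gam]
  linear_combination ((1 - a1 - a2) ^ 2 - 2 * a1 * a2 - ε * a1 * a2) * hε

/-- For `r ≥ 2` and `(a₁,a₂) ∈ Ω₃`, the tuple
`Φ₃(a₁,a₂) = ([e_r],[f_r],[φ₂],[φ₃])` lies in `P_r^{{4}}`, with the listed values of ω on
pairs, and has `CR₁ = a₁`, `CR₂ = a₂`. -/
theorem statement_11 (ε : ℂ) (d : ℕ)
    (hεd : (ε = 1 ∧ d = 1) ∨ (ε = -1 ∧ d = 0) ∨ (ε = 1 ∧ d = 0))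
    (r : ℕ) (hr : 2 ≤ r)
    (sq : ℂ → ℂ) (hsq : ∀ z, sq z ^ 2 = z)
    (a1 a2 : ℂ) (ha1 : a1 ≠ 0) (ha2 : a2 ≠ 0) (hDel : Del ε a1 a2 ≠ 0)
    (φ2 φ3 : Vc r d)
    (hφ2 : φ2 = eV r d r + eV r d (r - 1) - fV r d (r - 1) + fV r d r)
    (hφ3 : φ3 = a1 • eV r d r + phiM ε sq a1 a2 • eV r d (r - 1) +
      (ε * phiP ε sq a1 a2) • fV r d (r - 1) + (ε * a2) • fV r d r) :
    -- φ₂ and φ₃ are isotropic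
    IsoV ε r d φ2 ∧ IsoV ε r d φ3 ∧
    -- values of ω on pairs
    om ε r d (eV r d r) (fV r d r) = 1 ∧
    om ε r d (eV r d r) φ2 = 1 ∧
    om ε r d (eV r d r) φ3 = ε * a2 ∧
    om ε r d (fV r d r) φ2 = ε ∧
    om ε r d (fV r d r) φ3 = ε * a1 ∧
    om ε r d φ2 φ3 = ε ∧
    -- Φ₃(a₁,a₂) ∈ P_r^{{4}}
    Gen4 ε r d (eV r d r) (fV r d r) φ2 φ3 ∧
    -- cross-ratios
    CR1 ε r d (eV r d r) (fV r d r) φ2 φ3 = a1 ∧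
    CR2 ε r d (eV r d r) (fV r d r) φ2 φ3 = a2 := by
  have hε : ε ^ 2 = 1 := by rcases hεd with ⟨rfl, -⟩ | ⟨rfl, -⟩ | ⟨rfl, -⟩ <;> norm_num
  have hε0 : ε ≠ 0 := by rintro rfl; norm_num at hε
  rw [phi2_eq_hyp4] at hφ2
  change φ3 = hyp4 r d _ _ _ _ at hφ3
  subst hφ2 hφ3
  have G := gramMatrix_Φ₃ (d := d) hε hsq hr a1 a2
  have hgen : Gen4 ε r d _ _ _ _ := gen4_of_gramMatrix
    (fun i => by rw [G]; fin_cases i <;> simp)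
    (fun i j hij => by rw [G]; fin_cases i <;> fin_cases j <;> simp_all [Fin.lt_def])
    (by rw [G, det_gramMatrix_Φ₃ hε]; exact hDel)
  have ω (i j : Fin 4) := congrFun₂ G i j
  have h01 := ω 0 1; have h02 := ω 0 2; have h03 := ω 0 3; have h10 := ω 1 0; have h12 := ω 1 2
  have h13 := ω 1 3; have h20 := ω 2 0; have h21 := ω 2 1; have h23 := ω 2 3
  simp only [gramMatrix, Matrix.of_apply, omForm_apply, Matrix.cons_val', Matrix.cons_val,
    Matrix.cons_val_zero, Matrix.cons_val_one, Matrix.cons_val_fin_one]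
    at h01 h02 h03 h10 h12 h13 h20 h21 h23
  refine ⟨hgen.1.2.2.1, hgen.1.2.2.2.1, h01, h02, h03, h12, h13, h23, hgen, ?_, ?_⟩
  · rw [CR1, CR0, h10, h23, h13, h20]
    field_simp
  · rw [CR2, CR0, h21, h03, h23, h01]
    field_simp
end DCM
end
end

section
/- Fix (ε,d) ∈ {(1,1),(−1,0),(1,0)} and r ≥ r₁. For every p = (p₀,…,p₄) ∈ P_r^{(5)} and every function f : ℂ × ℂ → ℝ, writing (a₁,a₂,b₁,b₂,c₁) = (α₁(p),α₂(p),β₁(p),β₂(p),γ₁(p)) and ∂_i p for the 4-tuple obtained from p by deleting its i-th entry, one has Σ_{i=0}^{4} (−1)^i · f(CR₁(∂_i p), CR₂(∂_i p)) = f(ε·a₁c₁/(a₂b₁), c₁/a₂) − f(c₁/b₁, ε·b₂c₁/(a₂b₁)) + f(c₁, ε·a₁b₂c₁/(a₂b₁)) − f(b₁,b₂) + f(a₁,a₂). -/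
/-!
For the admissible `(ε, d)` the form ω is ε-symmetric with `ε² = 1`. Normalising with
`ω(w, v) = ε ω(v, w)`, every cross-ratio `CR₁`, `CR₂` of four of the points `v₀, …, v₄` becomes a
quotient of products of the ten pairings `ω(vᵢ, vⱼ)`, `i < j`, and `ε`. In these coordinates
the cross-ratios of the faces `∂₀ p, ∂₁ p, ∂₂ p` are rational functions of
`α₁, α₂, β₁, β₂, γ₁`, while those of `∂₃ p, ∂₄ p` are `β` and `α` themselves; substituting
gives the identity for every `f`.
-/

noncomputable section

open scoped Classical

namespace DCM

section CrossRatios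

variable {ε : ℂ} {r d : ℕ}

theorem om_comm (hε : ε ^ 2 = 1) (hd : d = 1 → ε = 1) (v w : Vc r d) :
    om ε r d w v = ε * om ε r d v w := by
  unfold om
  rw [mul_add, Finset.mul_sum]
  congr 1
  · refine Finset.sum_congr rfl fun j _ => ?_
    linear_combination -(v ⟨r + d + j, by omega⟩ * w ⟨r - 1 - j, by omega⟩) * hε
  · split_ifs with h
    · rw [hd h]; ring
    · simp

theorem CR1_eq (hε : ε ^ 2 = 1) (hd : d = 1 → ε = 1) (v0 v1 v2 v3 : Vc r d) :
    CR1 ε r d v0 v1 v2 v3 =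
      om ε r d v0 v2 * om ε r d v1 v3 / (om ε r d v0 v1 * om ε r d v2 v3) := by
  rw [CR1, CR0, inv_div, om_comm hε hd v0 v2, om_comm hε hd v0 v1, mul_left_comm,
    mul_assoc ε, mul_div_mul_left _ _ (IsUnit.of_pow_eq_one hε two_ne_zero).ne_zero]
  ring

theorem CR2_eq (hε : ε ^ 2 = 1) (hd : d = 1 → ε = 1) (v0 v1 v2 v3 : Vc r d) :
    CR2 ε r d v0 v1 v2 v3 =
      ε * om ε r d v0 v3 * om ε r d v1 v2 / (om ε r d v0 v1 * om ε r d v2 v3) := by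
  rw [CR2, CR0, om_comm hε hd v1 v2]
  ring

variable {v0 v1 v2 v3 v4 : Vc r d}

theorem CR1_face_zero (hε : ε ^ 2 = 1) (hd : d = 1 → ε = 1)
    (hp : Conf5 ε r d v0 v1 v2 v3 v4) :
    CR1 ε r d v1 v2 v3 v4 = ε * CR1 ε r d v0 v1 v2 v3 * CR1 ε r d v0 v1 v3 v4 /
      (CR2 ε r d v0 v1 v2 v3 * CR1 ε r d v0 v1 v2 v4) := by
  obtain ⟨⟨-, -, -, -, h01, h02, h03, -, -, h23⟩, -, -, h14, -, -⟩ := hp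
  have hε0 : ε ≠ 0 := (IsUnit.of_pow_eq_one hε two_ne_zero).ne_zero
  simp only [CR1_eq hε hd, CR2_eq hε hd]
  field_simp

theorem CR2_face_zero (hε : ε ^ 2 = 1) (hd : d = 1 → ε = 1)
    (hp : Conf5 ε r d v0 v1 v2 v3 v4) :
    CR2 ε r d v1 v2 v3 v4 = CR1 ε r d v0 v1 v3 v4 / CR2 ε r d v0 v1 v2 v3 := by
  obtain ⟨⟨-, -, -, -, h01, -, h03, h12, -, h23⟩, -, -, h14, -, h34⟩ := hp
  have hε0 : ε ≠ 0 := (IsUnit.of_pow_eq_one hε two_ne_zero).ne_zero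
  simp only [CR1_eq hε hd, CR2_eq hε hd]
  field_simp
  exact hε

theorem CR1_face_one (hε : ε ^ 2 = 1) (hd : d = 1 → ε = 1)
    (hp : Conf5 ε r d v0 v1 v2 v3 v4) :
    CR1 ε r d v0 v2 v3 v4 = CR1 ε r d v0 v1 v3 v4 / CR1 ε r d v0 v1 v2 v4 := by
  obtain ⟨⟨-, -, -, -, h01, -, -, -, -, -⟩, -, -, h14, -, -⟩ := hp
  simp only [CR1_eq hε hd]
  field_simp

theorem CR2_face_one (hε : ε ^ 2 = 1) (hd : d = 1 → ε = 1)
    (hp : Conf5 ε r d v0 v1 v2 v3 v4) :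
    CR2 ε r d v0 v2 v3 v4 = ε * CR2 ε r d v0 v1 v2 v4 * CR1 ε r d v0 v1 v3 v4 /
      (CR2 ε r d v0 v1 v2 v3 * CR1 ε r d v0 v1 v2 v4) := by
  obtain ⟨⟨-, -, -, -, h01, -, h03, h12, -, -⟩, -, -, h14, h24, -⟩ := hp
  have hε0 : ε ≠ 0 := (IsUnit.of_pow_eq_one hε two_ne_zero).ne_zero
  simp only [CR1_eq hε hd, CR2_eq hε hd]
  field_simp

theorem CR2_face_two (hε : ε ^ 2 = 1) (hd : d = 1 → ε = 1)
    (hp : Conf5 ε r d v0 v1 v2 v3 v4) :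
    CR2 ε r d v0 v1 v3 v4 = ε * CR1 ε r d v0 v1 v2 v3 * CR2 ε r d v0 v1 v2 v4 *
      CR1 ε r d v0 v1 v3 v4 / (CR2 ε r d v0 v1 v2 v3 * CR1 ε r d v0 v1 v2 v4) := by
  obtain ⟨⟨-, -, -, -, -, h02, h03, h12, -, h23⟩, -, -, h14, h24, -⟩ := hp
  have hε0 : ε ≠ 0 := (IsUnit.of_pow_eq_one hε two_ne_zero).ne_zero
  simp only [CR1_eq hε hd, CR2_eq hε hd]
  field_simp

end CrossRatios

theorem statement_14_general (ε : ℂ) (d : ℕ)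
    (hεd : (ε = 1 ∧ d = 1) ∨ (ε = -1 ∧ d = 0) ∨ (ε = 1 ∧ d = 0))
    (r : ℕ)
    (v0 v1 v2 v3 v4 : Vc r d) (hp : Conf5 ε r d v0 v1 v2 v3 v4)
    (f : ℂ × ℂ → ℝ)
    (a1 a2 b1 b2 c1 : ℂ)
    (ha1 : a1 = CR1 ε r d v0 v1 v2 v3) (ha2 : a2 = CR2 ε r d v0 v1 v2 v3)
    (hb1 : b1 = CR1 ε r d v0 v1 v2 v4) (hb2 : b2 = CR2 ε r d v0 v1 v2 v4)
    (hc1 : c1 = CR1 ε r d v0 v1 v3 v4) :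
    f (CR1 ε r d v1 v2 v3 v4, CR2 ε r d v1 v2 v3 v4)
      - f (CR1 ε r d v0 v2 v3 v4, CR2 ε r d v0 v2 v3 v4)
      + f (CR1 ε r d v0 v1 v3 v4, CR2 ε r d v0 v1 v3 v4)
      - f (CR1 ε r d v0 v1 v2 v4, CR2 ε r d v0 v1 v2 v4)
      + f (CR1 ε r d v0 v1 v2 v3, CR2 ε r d v0 v1 v2 v3)
    = f (ε * a1 * c1 / (a2 * b1), c1 / a2)
        - f (c1 / b1, ε * b2 * c1 / (a2 * b1))
        + f (c1, ε * a1 * b2 * c1 / (a2 * b1))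
        - f (b1, b2)
        + f (a1, a2) := by
  have hε : ε ^ 2 = 1 := by
    rcases hεd with ⟨rfl, -⟩ | ⟨rfl, -⟩ | ⟨rfl, -⟩ <;> norm_num
  have hd : d = 1 → ε = 1 := by
    rcases hεd with ⟨hε1, -⟩ | ⟨-, rfl⟩ | ⟨hε1, -⟩ <;> simp [*]
  subst ha1 ha2 hb1 hb2 hc1
  rw [CR1_face_zero hε hd hp, CR2_face_zero hε hd hp, CR1_face_one hε hd hp,
    CR2_face_one hε hd hp, CR2_face_two hε hd hp]

/-- The alternating sum of `f ∘ (CR₁, CR₂)` over the five faces of a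
tuple in `P_r^{(5)}` equals the five-term expression in the cross-ratio coordinates
`(a₁,a₂,b₁,b₂,c₁) = (α₁,α₂,β₁,β₂,γ₁)`. -/
theorem statement_14 (ε : ℂ) (d : ℕ)
    (hεd : (ε = 1 ∧ d = 1) ∨ (ε = -1 ∧ d = 0) ∨ (ε = 1 ∧ d = 0))
    (r : ℕ) (hr1 : 1 ≤ r) (hr2 : ε = 1 ∧ d = 0 → 2 ≤ r)
    (v0 v1 v2 v3 v4 : Vc r d) (hp : Conf5 ε r d v0 v1 v2 v3 v4)
    (f : ℂ × ℂ → ℝ)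
    (a1 a2 b1 b2 c1 : ℂ)
    (ha1 : a1 = CR1 ε r d v0 v1 v2 v3) (ha2 : a2 = CR2 ε r d v0 v1 v2 v3)
    (hb1 : b1 = CR1 ε r d v0 v1 v2 v4) (hb2 : b2 = CR2 ε r d v0 v1 v2 v4)
    (hc1 : c1 = CR1 ε r d v0 v1 v3 v4) :
    f (CR1 ε r d v1 v2 v3 v4, CR2 ε r d v1 v2 v3 v4)
      - f (CR1 ε r d v0 v2 v3 v4, CR2 ε r d v0 v2 v3 v4)
      + f (CR1 ε r d v0 v1 v3 v4, CR2 ε r d v0 v1 v3 v4)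
      - f (CR1 ε r d v0 v1 v2 v4, CR2 ε r d v0 v1 v2 v4)
      + f (CR1 ε r d v0 v1 v2 v3, CR2 ε r d v0 v1 v2 v3)
    = f (ε * a1 * c1 / (a2 * b1), c1 / a2)
        - f (c1 / b1, ε * b2 * c1 / (a2 * b1))
        + f (c1, ε * a1 * b2 * c1 / (a2 * b1))
        - f (b1, b2)
        + f (a1, a2) :=
  statement_14_general ε d hεd r v0 v1 v2 v3 v4 hp f a1 a2 b1 b2 c1 ha1 ha2 hb1 hb2 hc1
end DCM
end
end
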